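/- Let Γ be an infinite, connected, locally finite weighted graph and X ⊂ Γ a finite subset. Then every function f : X → ℝ extends to a harmonic function on all of Γ if and only if there is no non-zero finitely supported function on Γ that is harmonic on Γ∖X. -/

import Mathlib

/-!
Let `L = deg · Δ`, acting on finitely supported functions. Symmetry of the weights gives
`∑ (L f) h = ∑ f (L h)`, so under the duality between `V →₀ ℝ` and `V → ℝ` the harmonic
functions are the annihilator of `range L`, and the functions vanishing on `X` are the annihilator
of the functions supported in `X`. Every function on `X` extends harmonically iff these two
annihilators span the dual, which for subspaces of a vector space means `range L` meets the
functions supported in `X` only in `0`. By the maximum principle (a finitely supported function on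
an infinite connected graph that is harmonic everywhere vanishes) `L` is injective, so this says
that no non-zero finitely supported `f` has `L f` supported in `X`.
-/

/-- A weighted graph: undirected, loopless, locally finite, with symmetric
positive edge weights. -/
structure WGraph (V : Type*) where
  Adj : V → V → Prop
  symm : ∀ {x y}, Adj x y → Adj y x
  loopless : ∀ x, ¬ Adj x x
  w : V → V → ℝ
  w_symm : ∀ x y, w x y = w y x
  w_pos : ∀ {x y}, Adj x y → 0 < w x y
  locFin : ∀ x, {y | Adj x y}.Finite

namespace WGraph

variable {V : Type*} (G : WGraph V)

/-- The (weighted) degree of a vertex. -/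
noncomputable def deg (x : V) : ℝ := ∑ᶠ y ∈ {y | G.Adj x y}, G.w x y

/-- The Laplacian `Δf(x) = f(x) - (1/deg x) ∑_{y∼x} ω_{xy} f(y)`. -/
noncomputable def lap (f : V → ℝ) (x : V) : ℝ :=
  f x - (1 / G.deg x) * ∑ᶠ y ∈ {y | G.Adj x y}, G.w x y * f y

/-- `f` is harmonic on `G`. -/
def Harmonic (f : V → ℝ) : Prop := ∀ x, G.lap f x = 0

end WGraph

theorem Subspace.codisjoint_dualAnnihilator_iff {K M : Type*} [Field K] [AddCommGroup M]
    [Module K M] {W W' : Subspace K M} :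
    Codisjoint W.dualAnnihilator W'.dualAnnihilator ↔ Disjoint W W' := by
  rw [codisjoint_iff, disjoint_iff, ← Subspace.dualAnnihilator_inf_eq,
    Submodule.dualAnnihilator_eq_top_iff]

theorem Finsupp.exists_linearCombination_eq {α R : Type*} [CommSemiring R]
    (φ : Module.Dual R (α →₀ R)) : ∃ g : α → R, Finsupp.linearCombination R g = φ :=
  ⟨fun x => φ (Finsupp.single x 1), by ext; simp⟩

theorem Finsupp.linearCombination_mem_dualAnnihilator_supported_iff {α R : Type*}
    [CommSemiring R] {s : Set α} {g : α → R} :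
    Finsupp.linearCombination R g ∈ (Finsupp.supported R R s).dualAnnihilator ↔
      ∀ x ∈ s, g x = 0 := by
  rw [Submodule.mem_dualAnnihilator]
  refine ⟨fun h x hx => by simpa using h _ (Finsupp.single_mem_supported R 1 hx), ?_⟩
  intro h w hw
  rw [Finsupp.linearCombination_apply]
  exact Finset.sum_eq_zero fun x hx => by simp [h x (hw hx)]

namespace WGraph

variable {V : Type*} (G : WGraph V)

def Connected : Prop := ∀ x y : V, Relation.ReflTransGen G.Adj x y

noncomputable def nbr (x : V) : Finset V := (G.locFin x).toFinset

@[simp]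
theorem mem_nbr {x y : V} : y ∈ G.nbr x ↔ G.Adj x y := Set.Finite.mem_toFinset _

theorem adj_comm (x y : V) : G.Adj x y ↔ G.Adj y x := ⟨G.symm, G.symm⟩

theorem coe_nbr (x : V) : (G.nbr x : Set V) = {y | G.Adj x y} := (G.locFin x).coe_toFinset

theorem deg_eq_sum (x : V) : G.deg x = ∑ y ∈ G.nbr x, G.w x y := by
  rw [deg, ← coe_nbr, finsum_mem_coe_finset]

theorem deg_pos [Infinite V] (hconn : G.Connected) (x : V) : 0 < G.deg x := by
  obtain ⟨y, hy⟩ := exists_ne x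
  obtain ⟨z, hxz, -⟩ := ((hconn x y).cases_head).resolve_left hy.symm
  rw [deg_eq_sum]
  exact Finset.sum_pos (fun y hy => G.w_pos ((G.mem_nbr).1 hy)) ⟨z, G.mem_nbr.2 hxz⟩

noncomputable def degLap : (V → ℝ) →ₗ[ℝ] (V → ℝ) where
  toFun f x := G.deg x * f x - ∑ y ∈ G.nbr x, G.w x y * f y
  map_add' f g := by
    ext x
    simp only [Pi.add_apply, mul_add, Finset.sum_add_distrib]
    ring
  map_smul' a f := by
    ext x
    simp only [Pi.smul_apply, smul_eq_mul, RingHom.id_apply, mul_sub, Finset.mul_sum]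
    congr 1
    · ring
    · exact Finset.sum_congr rfl fun _ _ => by ring

theorem degLap_apply (f : V → ℝ) (x : V) :
    G.degLap f x = G.deg x * f x - ∑ y ∈ G.nbr x, G.w x y * f y := rfl

theorem degLap_eq_deg_mul_lap {x : V} (hx : G.deg x ≠ 0) (f : V → ℝ) :
    G.degLap f x = G.deg x * G.lap f x := by
  rw [degLap_apply, lap, ← coe_nbr, finsum_mem_coe_finset, mul_sub, ← mul_assoc,
    mul_one_div_cancel hx, one_mul]

theorem lap_eq_zero_iff [Infinite V] (hconn : G.Connected) (f : V → ℝ) (x : V) :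
    G.lap f x = 0 ↔ G.degLap f x = 0 := by
  rw [G.degLap_eq_deg_mul_lap (G.deg_pos hconn x).ne', mul_eq_zero,
    or_iff_right (G.deg_pos hconn x).ne']

theorem harmonic_iff [Infinite V] (hconn : G.Connected) (f : V → ℝ) :
    G.Harmonic f ↔ G.degLap f = 0 := by
  simp only [Harmonic, G.lap_eq_zero_iff hconn, funext_iff, Pi.zero_apply]

theorem eq_of_adj_of_degLap_eq_zero {f : V → ℝ} {a b : V} (ha : G.degLap f a = 0)
    (hmax : ∀ y, f y ≤ f a) (hab : G.Adj a b) : f b = f a := by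
  have hsum : ∑ y ∈ G.nbr a, G.w a y * (f a - f y) = 0 := by
    rw [← ha, degLap_apply, deg_eq_sum, Finset.sum_mul]
    simp only [mul_sub, Finset.sum_sub_distrib]
  have hnonneg : ∀ y ∈ G.nbr a, 0 ≤ G.w a y * (f a - f y) := fun y hy =>
    mul_nonneg (G.w_pos (G.mem_nbr.1 hy)).le (sub_nonneg.2 (hmax y))
  have hb := (Finset.sum_eq_zero_iff_of_nonneg hnonneg).1 hsum b (G.mem_nbr.2 hab)
  rcases mul_eq_zero.1 hb with hw | hfb
  · exact absurd hw (G.w_pos hab).ne'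
  · linarith

theorem eq_of_forall_le_of_degLap_eq_zero (hconn : G.Connected)
    {f : V → ℝ} (hf : G.degLap f = 0) {a : V} (hmax : ∀ y, f y ≤ f a) (b : V) : f b = f a := by
  induction hconn a b with
  | refl => rfl
  | tail _ hcb ih =>
    exact (G.eq_of_adj_of_degLap_eq_zero (congrFun hf _) (fun y => ih ▸ hmax y) hcb).trans ih

theorem nonpos_of_degLap_eq_zero [Infinite V] (hconn : G.Connected) {f : V → ℝ}
    (hfin : (Function.support f).Finite) (hf : G.degLap f = 0) (x : V) : f x ≤ 0 := by
  obtain ⟨z, hz⟩ := hfin.infinite_compl.nonempty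
  rw [Set.mem_compl_iff, Function.notMem_support] at hz
  -- since `f z = 0`, a maximum of `f` on `support f ∪ {z}` is a global maximum
  obtain ⟨m, -, hm⟩ := Set.exists_max_image _ f (hfin.insert z) (Set.insert_nonempty z _)
  have hmax : ∀ y, f y ≤ f m := fun y => by
    by_cases hy : f y = 0
    · rw [hy, ← hz]
      exact hm z (Set.mem_insert _ _)
    · exact hm y (Set.mem_insert_of_mem _ hy)
  calc f x ≤ f m := hmax x
    _ = f z := (G.eq_of_forall_le_of_degLap_eq_zero hconn hf hmax z).symm
    _ = 0 := hz

theorem eq_zero_of_degLap_eq_zero [Infinite V] (hconn : G.Connected) {f : V → ℝ}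
    (hfin : (Function.support f).Finite) (hf : G.degLap f = 0) : f = 0 := by
  have hneg : G.degLap (-f) = 0 := by rw [map_neg, hf, neg_zero]
  funext x
  exact le_antisymm (G.nonpos_of_degLap_eq_zero hconn hfin hf x)
    (neg_nonpos.1 (G.nonpos_of_degLap_eq_zero hconn (by rwa [Function.support_neg]) hneg x))

noncomputable def lapFinsupp : (V →₀ ℝ) →ₗ[ℝ] (V →₀ ℝ) :=
  Finsupp.linearCombination ℝ fun y =>
    G.deg y • Finsupp.single y 1 - ∑ z ∈ G.nbr y, G.w y z • Finsupp.single z 1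

theorem linearCombination_lapFinsupp (h : V → ℝ) (f : V →₀ ℝ) :
    Finsupp.linearCombination ℝ h (G.lapFinsupp f) =
      Finsupp.linearCombination ℝ (G.degLap h) f := by
  suffices (Finsupp.linearCombination ℝ h).comp G.lapFinsupp =
      Finsupp.linearCombination ℝ (G.degLap h) from LinearMap.congr_fun this f
  ext y
  simp [lapFinsupp, degLap_apply]

-- `lapFinsupp` is defined by its columns; it agrees with `degLap` because the weights are symmetric.
theorem coe_lapFinsupp (f : V →₀ ℝ) : ⇑(G.lapFinsupp f) = G.degLap f := by
  suffices Finsupp.lcoeFun ∘ₗ G.lapFinsupp = G.degLap ∘ₗ Finsupp.lcoeFun from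
    LinearMap.congr_fun this f
  classical
  ext y x
  simp only [lapFinsupp, Finsupp.smul_single, smul_eq_mul, mul_one, LinearMap.coe_comp,
    Function.comp_apply, Finsupp.lsingle_apply, Finsupp.linearCombination_single, one_smul,
    Finsupp.lcoeFun_apply, Finsupp.coe_sub, Finsupp.coe_finsetSum, Pi.sub_apply,
    Finsupp.single_apply, Finset.sum_apply, Finset.sum_ite_eq', mem_nbr, degLap_apply, mul_ite,
    mul_zero, Finset.sum_ite_eq]
  rw [G.adj_comm, G.w_symm]
  congr 1
  split_ifs with hyx <;> simp only [hyx]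

theorem lapFinsupp_injective [Infinite V] (hconn : G.Connected) :
    Function.Injective G.lapFinsupp := by
  rw [← LinearMap.ker_eq_bot, LinearMap.ker_eq_bot']
  intro f hf
  have hlap : G.degLap f = 0 := by rw [← coe_lapFinsupp, hf, Finsupp.coe_zero]
  exact DFunLike.coe_injective (G.eq_zero_of_degLap_eq_zero hconn f.hasFiniteSupport hlap)

theorem harmonic_iff_mem_dualAnnihilator [Infinite V] (hconn : G.Connected) (h : V → ℝ) :
    G.Harmonic h ↔
      Finsupp.linearCombination ℝ h ∈ (LinearMap.range G.lapFinsupp).dualAnnihilator := by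
  simp only [G.harmonic_iff hconn, Submodule.mem_dualAnnihilator, LinearMap.mem_range,
    forall_exists_index, forall_apply_eq_imp_iff, linearCombination_lapFinsupp]
  refine ⟨fun hh f => by simp [hh], fun hh => funext fun x => by simpa using hh (.single x 1)⟩

theorem forall_exists_harmonic_iff_codisjoint [Infinite V]
    (hconn : G.Connected) (X : Set V) :
    (∀ f₀ : V → ℝ, ∃ h : V → ℝ, G.Harmonic h ∧ ∀ x ∈ X, h x = f₀ x) ↔
      Codisjoint (LinearMap.range G.lapFinsupp).dualAnnihilator
        (Finsupp.supported ℝ ℝ X).dualAnnihilator := by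
  rw [codisjoint_iff, Submodule.eq_top_iff']
  simp only [Submodule.mem_sup]
  constructor
  · intro hext φ
    obtain ⟨f₀, rfl⟩ := Finsupp.exists_linearCombination_eq φ
    obtain ⟨h, hh, hhX⟩ := hext f₀
    refine ⟨_, (G.harmonic_iff_mem_dualAnnihilator hconn h).1 hh,
      Finsupp.linearCombination ℝ (f₀ - h), ?_, ?_⟩
    · exact Finsupp.linearCombination_mem_dualAnnihilator_supported_iff.2 fun x hx => by
        simp [hhX x hx]
    · ext x
      simp
  · intro hsplit f₀
    obtain ⟨ψ, hψ, χ, hχ, hsum⟩ := hsplit (Finsupp.linearCombination ℝ f₀)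
    obtain ⟨h, rfl⟩ := Finsupp.exists_linearCombination_eq ψ
    obtain ⟨g, rfl⟩ := Finsupp.exists_linearCombination_eq χ
    refine ⟨h, (G.harmonic_iff_mem_dualAnnihilator hconn h).2 hψ, fun x hx => ?_⟩
    have hgx := Finsupp.linearCombination_mem_dualAnnihilator_supported_iff.1 hχ x hx
    simpa [hgx] using LinearMap.congr_fun hsum (.single x 1)

theorem disjoint_range_lapFinsupp_supported_iff [Infinite V]
    (hconn : G.Connected) (X : Set V) :
    Disjoint (LinearMap.range G.lapFinsupp) (Finsupp.supported ℝ ℝ X) ↔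
      ¬ ∃ f : V → ℝ, f ≠ 0 ∧ (Function.support f).Finite ∧ ∀ x ∉ X, G.lap f x = 0 := by
  simp only [Submodule.disjoint_def, LinearMap.mem_range, forall_exists_index,
    forall_apply_eq_imp_iff, Finsupp.mem_supported', coe_lapFinsupp, ← G.lap_eq_zero_iff hconn,
    map_eq_zero_iff _ (G.lapFinsupp_injective hconn)]
  constructor
  · rintro hno ⟨f, hf0, hfin, hfX⟩
    exact hf0 (congrArg DFunLike.coe (hno (Finsupp.ofSupportFinite f hfin) hfX))
  · rintro hno f hfX
    by_contra hf0
    exact hno ⟨f, fun h => hf0 (DFunLike.coe_injective h), f.hasFiniteSupport, hfX⟩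

end WGraph

theorem duality_harmonic_extension_general {V : Type*} [Infinite V] (G : WGraph V)
    (hconn : ∀ x y : V, Relation.ReflTransGen G.Adj x y)
    (X : Set V) :
    (∀ f₀ : V → ℝ, ∃ h : V → ℝ, G.Harmonic h ∧ ∀ x ∈ X, h x = f₀ x) ↔
      ¬ ∃ f : V → ℝ, f ≠ 0 ∧ (Function.support f).Finite ∧
        ∀ x ∉ X, G.lap f x = 0 := by
  rw [G.forall_exists_harmonic_iff_codisjoint hconn, Subspace.codisjoint_dualAnnihilator_iff,
    G.disjoint_range_lapFinsupp_supported_iff hconn]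

/-- Duality result for harmonic functions: on an infinite, connected, locally
finite weighted graph, every function on a finite set `X` extends to a harmonic
function if and only if there is no non-zero finitely supported function that is
harmonic off `X`. -/
theorem duality_harmonic_extension {V : Type*} [Infinite V] (G : WGraph V)
    (hconn : ∀ x y : V, Relation.ReflTransGen G.Adj x y)
    (X : Set V) (hX : X.Finite) :
    (∀ f₀ : V → ℝ, ∃ h : V → ℝ, G.Harmonic h ∧ ∀ x ∈ X, h x = f₀ x) ↔
      ¬ ∃ f : V → ℝ, f ≠ 0 ∧ (Function.support f).Finite ∧
        ∀ x ∉ X, G.lap f x = 0 :=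
  duality_harmonic_extension_general G hconn X
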